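/- arXiv:1801.05661 — 6 statements merged into one kernel-verified Lean document; each statement's English description precedes it below -/
import Mathlib

section
/- Let V be an m×m symmetric positive semidefinite real matrix and let f_u, f_v ∈ R^m. Define d_u = f_u'Vf_u, d_v = f_v'Vf_v, d_uv = f_u'Vf_v, a_u = f_u'V²f_u, a_v = f_v'V²f_v, a_uv = f_u'V²f_v, and set A = a_v − a_u, B = 2·d_uv·a_uv − d_u·a_v − d_v·a_u, C = d_v − d_u, D = d_u·d_v − d_uv². Then B² − A(AD + BC) ≥ 0. -/
open Matrix

lemma psd_cauchy_schwarz {m : ℕ} (A : Matrix (Fin m) (Fin m) ℝ) (hA : A.PosSemidef)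
    (x y : Fin m → ℝ) :
    (x ⬝ᵥ A.mulVec y) ^ 2 ≤ (x ⬝ᵥ A.mulVec x) * (y ⬝ᵥ A.mulVec y) := by
  have hsym : ∀ u v : Fin m → ℝ, u ⬝ᵥ A.mulVec v = v ⬝ᵥ A.mulVec u := by
    intro u v
    have hAT : Aᵀ = A := by
      have := hA.1
      simpa [Matrix.IsHermitian, Matrix.conjTranspose_eq_transpose_of_trivial] using this
    rw [dotProduct_mulVec, ← hAT, vecMul_transpose, dotProduct_comm, hAT]
  have key : ∀ t : ℝ, 0 ≤ (y ⬝ᵥ A.mulVec y) * (t * t) + (2 * (x ⬝ᵥ A.mulVec y)) * t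
      + (x ⬝ᵥ A.mulVec x) := by
    intro t
    have h := hA.dotProduct_mulVec_nonneg (x + t • y)
    simp only [star_trivial] at h
    have hexp : (x + t • y) ⬝ᵥ A.mulVec (x + t • y)
        = (y ⬝ᵥ A.mulVec y) * (t * t) + (2 * (x ⬝ᵥ A.mulVec y)) * t + (x ⬝ᵥ A.mulVec x) := by
      simp only [mulVec_add, mulVec_smul, add_dotProduct, dotProduct_add, smul_dotProduct,
        dotProduct_smul, smul_eq_mul, hsym y x]
      ring
    rw [hexp] at h
    exact h
  have hd := discrim_le_zero key
  rw [discrim] at hd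
  nlinarith [hd]

/-- The discriminant `B² − A(AD + BC)` in the A-optimal step-length derivation
is nonnegative. -/
theorem discriminant_nonneg (m : ℕ) (V : Matrix (Fin m) (Fin m) ℝ) (hV : V.PosSemidef)
    (fu fv : Fin m → ℝ) (du dv duv au av auv A B C D : ℝ)
    (hdu : du = fu ⬝ᵥ V.mulVec fu) (hdv : dv = fv ⬝ᵥ V.mulVec fv)
    (hduv : duv = fu ⬝ᵥ V.mulVec fv)
    (hau : au = fu ⬝ᵥ (V * V).mulVec fu) (hav : av = fv ⬝ᵥ (V * V).mulVec fv)
    (hauv : auv = fu ⬝ᵥ (V * V).mulVec fv)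
    (hA : A = av - au) (hB : B = 2 * duv * auv - du * av - dv * au)
    (hC : C = dv - du) (hD : D = du * dv - duv ^ 2) :
    0 ≤ B ^ 2 - A * (A * D + B * C) := by
  have hV2 : (V * V).PosSemidef := by
    have := hV.pow 2
    rwa [pow_two] at this
  have h1 : duv ^ 2 ≤ du * dv := by
    rw [hdu, hdv, hduv]; exact psd_cauchy_schwarz V hV fu fv
  have h2 : auv ^ 2 ≤ au * av := by
    rw [hau, hav, hauv]; exact psd_cauchy_schwarz (V * V) hV2 fu fv
  have h3 : 0 ≤ (du + dv) ^ 2 - 4 * duv ^ 2 := by nlinarith [sq_nonneg (du - dv)]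
  have h4 : 0 ≤ (au * av - auv ^ 2) * ((du + dv) ^ 2 - 4 * duv ^ 2) :=
    mul_nonneg (by linarith) h3
  subst hA hB hC hD
  nlinarith [sq_nonneg (duv * (au + av) - auv * (du + dv)), h4]
end

section
/- Let w be a design with nonsingular information matrix M(w) and let w^D be a D-optimal design (maximizing det(M(·))^{1/m} over all designs). Then the D-efficiency satisfies (det M(w) / det M(w^D))^{1/m} ≥ m / max_{x} d_x(w), where d_x(w) = f(x)'M⁻¹(w)f(x). -/
open Matrix

private lemma trace_mul_vecMulVec {m : ℕ} (A : Matrix (Fin m) (Fin m) ℝ) (u : Fin m → ℝ) :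
    (A * vecMulVec u u).trace = u ⬝ᵥ A.mulVec u := by
  simp only [Matrix.trace, Matrix.diag_apply, Matrix.mul_apply, vecMulVec_apply,
    dotProduct, Matrix.mulVec, Finset.mul_sum]
  exact Finset.sum_congr rfl fun i _ => Finset.sum_congr rfl fun j _ => by ring

private lemma dot_vecMulVec {m : ℕ} (u v : Fin m → ℝ) :
    v ⬝ᵥ (vecMulVec u u).mulVec v = (u ⬝ᵥ v) ^ 2 := by
  simp only [Matrix.mulVec, dotProduct, vecMulVec_apply, Finset.mul_sum, sq, Finset.sum_mul]
  exact Finset.sum_congr rfl fun i _ => Finset.sum_congr rfl fun j _ => by ring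

private lemma sum_mulVec' {m n : ℕ} (A : Fin n → Matrix (Fin m) (Fin m) ℝ) (v : Fin m → ℝ) :
    (∑ x, A x) *ᵥ v = ∑ x, (A x) *ᵥ v := by
  ext i
  simp only [Matrix.mulVec, dotProduct, Matrix.sum_apply, Finset.sum_apply, Finset.sum_mul]
  exact Finset.sum_comm

private lemma dot_sum {m n : ℕ} (v : Fin m → ℝ) (u : Fin n → Fin m → ℝ) :
    v ⬝ᵥ (∑ x, u x) = ∑ x, v ⬝ᵥ u x := by
  simp only [dotProduct, Finset.sum_apply, Finset.mul_sum]
  exact Finset.sum_comm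

private lemma quad_sum {m n : ℕ} (c : Fin n → ℝ) (g : Fin n → Fin m → ℝ) (v : Fin m → ℝ) :
    v ⬝ᵥ (∑ x, c x • vecMulVec (g x) (g x)).mulVec v = ∑ x, c x * (g x ⬝ᵥ v) ^ 2 := by
  rw [sum_mulVec', dot_sum]
  refine Finset.sum_congr rfl fun x _ => ?_
  rw [Matrix.smul_mulVec, dotProduct_smul, smul_eq_mul, dot_vecMulVec]

private lemma herm_sum {m n : ℕ} (c : Fin n → ℝ) (g : Fin n → Fin m → ℝ) :
    (∑ x, c x • vecMulVec (g x) (g x)).IsHermitian := by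
  show _ᴴ = _
  ext i j
  simp only [conjTranspose_apply, Matrix.sum_apply, Pi.smul_apply, vecMulVec_apply,
    smul_eq_mul, star_trivial]
  exact Finset.sum_congr rfl fun x _ => by
    simp only [Matrix.smul_apply, vecMulVec_apply, smul_eq_mul]; ring

private lemma psd_sum {m n : ℕ} (c : Fin n → ℝ) (g : Fin n → Fin m → ℝ)
    (hc : ∀ x, 0 ≤ c x) : (∑ x, c x • vecMulVec (g x) (g x)).PosSemidef := by
  refine PosSemidef.of_dotProduct_mulVec_nonneg (herm_sum c g) fun v => ?_
  rw [star_trivial, quad_sum]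
  exact Finset.sum_nonneg fun x _ => mul_nonneg (hc x) (sq_nonneg _)

private lemma det_rpow_le_trace_div {m : ℕ} (hm : 0 < m) {S : Matrix (Fin m) (Fin m) ℝ}
    (hS : S.PosSemidef) : S.det ^ ((1 : ℝ) / m) ≤ S.trace / m := by
  have hH := hS.1
  have hmR : (0 : ℝ) < m := Nat.cast_pos.mpr hm
  have hdet : S.det = ∏ i, hH.eigenvalues i := by simpa using hH.det_eq_prod_eigenvalues
  have hU : (star (hH.eigenvectorUnitary : Matrix (Fin m) (Fin m) ℝ)) *
      (hH.eigenvectorUnitary : Matrix (Fin m) (Fin m) ℝ) = 1 :=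
    mem_unitaryGroup_iff'.mp hH.eigenvectorUnitary.2
  have htr : S.trace = ∑ i, hH.eigenvalues i := by
    rw [hH.trace_eq_sum_eigenvalues]
    simp
  have key := Real.geom_mean_le_arith_mean_weighted Finset.univ (fun _ => (1 : ℝ) / m)
      hH.eigenvalues (fun i _ => by positivity)
      (by simp only [Finset.sum_const, Finset.card_univ, Fintype.card_fin, nsmul_eq_mul]
          field_simp)
      (fun i _ => hS.eigenvalues_nonneg i)
  calc S.det ^ ((1 : ℝ) / m) = ∏ i, hH.eigenvalues i ^ ((1 : ℝ) / m) := by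
        rw [hdet, Real.finset_prod_rpow _ _ (fun i _ => hS.eigenvalues_nonneg i)]
    _ ≤ ∑ i, (1 : ℝ) / m * hH.eigenvalues i := key
    _ = S.trace / m := by
        rw [htr, Finset.sum_div]
        exact Finset.sum_congr rfl fun i _ => by ring

open scoped MatrixOrder in
private lemma exists_sqrt_psd {m : ℕ} {A : Matrix (Fin m) (Fin m) ℝ} (hA : A.PosSemidef) :
    ∃ R : Matrix (Fin m) (Fin m) ℝ, R * R = A ∧ Rᴴ = R :=
  ⟨CFC.sqrt A, CFC.sqrt_mul_sqrt_self A hA.nonneg, (CFC.sqrt_nonneg A).posSemidef.1⟩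

/-- Kiefer–Wolfowitz type D-efficiency lower bound:
`eff_D(w | w^D) = (det M(w)/det M(w^D))^{1/m} ≥ m / max_x d_x(w)`. -/
theorem D_efficiency_lower_bound (m n : ℕ) (hm : 0 < m) (hn : 0 < n)
    (f : Fin n → Fin m → ℝ) (hspan : Submodule.span ℝ (Set.range f) = ⊤)
    (w wD : Fin n → ℝ)
    (hw0 : ∀ x, 0 ≤ w x) (hw1 : ∑ x, w x = 1)
    (hwD0 : ∀ x, 0 ≤ wD x) (hwD1 : ∑ x, wD x = 1)
    (M MD : Matrix (Fin m) (Fin m) ℝ)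
    (hM : M = ∑ x, w x • vecMulVec (f x) (f x))
    (hMD : MD = ∑ x, wD x • vecMulVec (f x) (f x))
    (hreg : M.det ≠ 0)
    (hopt : ∀ w' : Fin n → ℝ, (∀ x, 0 ≤ w' x) → ∑ x, w' x = 1 →
      (∑ x, w' x • vecMulVec (f x) (f x)).det ^ ((1 : ℝ) / m) ≤ MD.det ^ ((1 : ℝ) / m)) :
    (m : ℝ) / (Finset.univ.sup' ⟨⟨0, hn⟩, Finset.mem_univ _⟩
        (fun x => f x ⬝ᵥ M⁻¹.mulVec (f x))) ≤ (M.det / MD.det) ^ ((1 : ℝ) / m) := by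
  have hmR : (0 : ℝ) < m := Nat.cast_pos.mpr hm
  have hMpsd : M.PosSemidef := hM ▸ psd_sum w f hw0
  have hMDpsd : MD.PosSemidef := hMD ▸ psd_sum wD f hwD0
  -- det M > 0
  have hdetM : 0 < M.det := by
    have h0 : 0 ≤ M.det := by
      rw [hMpsd.1.det_eq_prod_eigenvalues]
      exact Finset.prod_nonneg fun i _ => by simpa using hMpsd.eigenvalues_nonneg i
    exact h0.lt_of_ne (Ne.symm hreg)
  -- det MD > 0
  have hdetMD : 0 < MD.det := by
    have hoptw := hopt w hw0 hw1
    rw [← hM] at hoptw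
    have hMD0 : 0 ≤ MD.det := by
      rw [hMDpsd.1.det_eq_prod_eigenvalues]
      exact Finset.prod_nonneg fun i _ => by simpa using hMDpsd.eigenvalues_nonneg i
    refine hMD0.lt_of_ne fun h => ?_
    rw [← h, Real.zero_rpow (one_div_ne_zero (Nat.cast_ne_zero.mpr hm.ne'))] at hoptw
    exact absurd hoptw (not_le.mpr (Real.rpow_pos_of_pos hdetM _))
  have hMunit : IsUnit M.det := Ne.isUnit hreg
  -- M⁻¹ is PSD
  have hMinvpsd : M⁻¹.PosSemidef := by
    refine PosSemidef.of_dotProduct_mulVec_nonneg hMpsd.1.inv fun v => ?_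
    have h1 : M *ᵥ (M⁻¹ *ᵥ v) = v := by
      rw [mulVec_mulVec, Matrix.mul_nonsing_inv _ hMunit, one_mulVec]
    have h2 := hMpsd.dotProduct_mulVec_nonneg (M⁻¹ *ᵥ v)
    rw [star_trivial] at h2 ⊢
    calc (0 : ℝ) ≤ (M⁻¹ *ᵥ v) ⬝ᵥ (M *ᵥ (M⁻¹ *ᵥ v)) := h2
      _ = v ⬝ᵥ (M⁻¹ *ᵥ v) := by rw [h1, dotProduct_comm]
  obtain ⟨R, hRR, hRh⟩ := exists_sqrt_psd hMinvpsd
  have hSpsd : (R * MD * R).PosSemidef := by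
    have := hMDpsd.mul_mul_conjTranspose_same R
    rwa [hRh] at this
  have hdetS : (R * MD * R).det = MD.det / M.det := by
    have hthis : R.det * R.det = M⁻¹.det := by rw [← det_mul, hRR]
    rw [Matrix.det_nonsing_inv, Ring.inverse_eq_inv'] at hthis
    calc (R * MD * R).det = (R.det * R.det) * MD.det := by rw [det_mul, det_mul]; ring
      _ = M.det⁻¹ * MD.det := by rw [hthis]
      _ = MD.det / M.det := by rw [inv_mul_eq_div]
  have htrS : (R * MD * R).trace = ∑ x, wD x * (f x ⬝ᵥ M⁻¹.mulVec (f x)) := by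
    rw [Matrix.trace_mul_comm, ← Matrix.mul_assoc, hRR, hMD, Matrix.mul_sum,
      Matrix.trace_sum]
    refine Finset.sum_congr rfl fun x _ => ?_
    rw [Matrix.mul_smul, Matrix.trace_smul, trace_mul_vecMulVec, smul_eq_mul]
  set d := Finset.univ.sup' ⟨⟨0, hn⟩, Finset.mem_univ _⟩
      (fun x => f x ⬝ᵥ M⁻¹.mulVec (f x)) with hddef
  have hxd : ∀ x, f x ⬝ᵥ M⁻¹.mulVec (f x) ≤ d :=
    fun x => Finset.le_sup' (fun x => f x ⬝ᵥ M⁻¹.mulVec (f x)) (Finset.mem_univ x)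
  -- trace bound
  have htr_le : (R * MD * R).trace ≤ d := by
    rw [htrS]
    calc ∑ x, wD x * (f x ⬝ᵥ M⁻¹.mulVec (f x)) ≤ ∑ x, wD x * d :=
          Finset.sum_le_sum fun x _ => mul_le_mul_of_nonneg_left (hxd x) (hwD0 x)
      _ = d := by rw [← Finset.sum_mul, hwD1, one_mul]
  -- m ≤ d
  have hmd : (m : ℝ) ≤ d := by
    have hIM : M⁻¹ * M = 1 := Matrix.nonsing_inv_mul M hMunit
    have e1 : (M⁻¹ * M).trace = ∑ x, w x * (f x ⬝ᵥ M⁻¹.mulVec (f x)) := by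
      nth_rewrite 2 [hM]
      rw [Matrix.mul_sum, Matrix.trace_sum]
      exact Finset.sum_congr rfl fun x _ => by
        rw [Matrix.mul_smul, Matrix.trace_smul, trace_mul_vecMulVec, smul_eq_mul]
    have e2 : (M⁻¹ * M).trace = (m : ℝ) := by
      rw [hIM, Matrix.trace_one]; simp
    calc (m : ℝ) = ∑ x, w x * (f x ⬝ᵥ M⁻¹.mulVec (f x)) := by rw [← e2, e1]
      _ ≤ ∑ x, w x * d := Finset.sum_le_sum fun x _ =>
          mul_le_mul_of_nonneg_left (hxd x) (hw0 x)
      _ = d := by rw [← Finset.sum_mul, hw1, one_mul]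
  have hd : (0 : ℝ) < d := lt_of_lt_of_le hmR hmd
  -- AM-GM
  have key : (MD.det / M.det) ^ ((1 : ℝ) / m) ≤ d / m := by
    calc (MD.det / M.det) ^ ((1 : ℝ) / m) = (R * MD * R).det ^ ((1 : ℝ) / m) := by rw [hdetS]
      _ ≤ (R * MD * R).trace / m := det_rpow_le_trace_div hm hSpsd
      _ ≤ d / m := by apply div_le_div_of_nonneg_right htr_le hmR.le |>.trans_eq rfl
  rw [Real.div_rpow hdetMD.le hdetM.le] at key
  rw [Real.div_rpow hdetM.le hdetMD.le]
  set A := M.det ^ ((1 : ℝ) / m) with hA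
  set B := MD.det ^ ((1 : ℝ) / m) with hB
  have hApos : 0 < A := Real.rpow_pos_of_pos hdetM _
  have hBpos : 0 < B := Real.rpow_pos_of_pos hdetMD _
  rw [div_le_div_iff₀ hApos hmR] at key
  rw [div_le_div_iff₀ hd hBpos]
  nlinarith [key]
end

section
/- Let w be a design with nonsingular information matrix M(w) and let w^A be an A-optimal design (maximizing (tr M(·)⁻¹)⁻¹ over regular designs). Then the A-efficiency satisfies tr(M⁻¹(w^A)) / tr(M⁻¹(w)) ≥ tr(M⁻¹(w)) / max_x a_x(w), where a_x(w) = f(x)'M⁻²(w)f(x). -/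
open Matrix

/-- Cauchy–Schwarz for the Frobenius inner product. -/
lemma trace_cs {m : ℕ} (A B : Matrix (Fin m) (Fin m) ℝ) :
    (Matrix.trace (Aᵀ * B)) ^ 2 ≤ Matrix.trace (Aᵀ * A) * Matrix.trace (Bᵀ * B) := by
  have h : ∀ C D : Matrix (Fin m) (Fin m) ℝ,
      Matrix.trace (Cᵀ * D) = ∑ p : Fin m × Fin m, C p.1 p.2 * D p.1 p.2 := by
    intro C D
    rw [Fintype.sum_prod_type]
    simp [Matrix.trace, Matrix.diag, Matrix.mul_apply]
    exact Finset.sum_comm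
  rw [h, h, h]
  simpa [sq] using Finset.sum_mul_sq_le_sq_mul_sq Finset.univ
    (fun p : Fin m × Fin m => A p.1 p.2) (fun p : Fin m × Fin m => B p.1 p.2)

lemma trace_vmv {m : ℕ} (u : Fin m → ℝ) (C : Matrix (Fin m) (Fin m) ℝ) :
    Matrix.trace (vecMulVec u u * C) = u ⬝ᵥ C.mulVec u := by
  simp [Matrix.trace, Matrix.diag, Matrix.mul_apply, vecMulVec_apply, dotProduct,
    Matrix.mulVec, Finset.mul_sum]
  rw [Finset.sum_comm]
  congr 1; ext i; congr 1; ext j; ring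

lemma sum_psd {m n : ℕ} (c : Fin n → ℝ) (hc : ∀ x, 0 ≤ c x) (f : Fin n → Fin m → ℝ) :
    (∑ x, c x • vecMulVec (f x) (f x)).PosSemidef := by
  rw [posSemidef_iff_dotProduct_mulVec]
  constructor
  · ext i j
    simp only [conjTranspose_apply, Matrix.sum_apply, Matrix.smul_apply, vecMulVec_apply,
      star_trivial, smul_eq_mul]
    exact Finset.sum_congr rfl fun x _ => by ring
  · intro y
    have h1 : (∑ x, c x • vecMulVec (f x) (f x)) *ᵥ y
        = ∑ x, c x • (vecMulVec (f x) (f x) *ᵥ y) := by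
      ext i
      simp [Matrix.mulVec, dotProduct, Matrix.sum_apply, Finset.sum_mul, Finset.mul_sum]
      rw [Finset.sum_comm]
      exact Finset.sum_congr rfl fun a _ => Finset.sum_congr rfl fun b _ => by
        simp [vecMulVec_apply]; ring
    have h2 : ∀ x : Fin n, vecMulVec (f x) (f x) *ᵥ y = (f x ⬝ᵥ y) • f x := by
      intro x
      ext i
      simp only [Matrix.mulVec, vecMulVec_apply, dotProduct, Pi.smul_apply, smul_eq_mul,
        Finset.sum_mul, Finset.mul_sum]
      exact Finset.sum_congr rfl fun k _ => by ring
    have h3 : y ⬝ᵥ (∑ x, c x • ((f x ⬝ᵥ y) • f x)) = ∑ x, c x * ((f x ⬝ᵥ y) * (f x ⬝ᵥ y)) := by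
      simp only [dotProduct, Finset.sum_apply, Pi.smul_apply, smul_eq_mul, Finset.mul_sum,
        Finset.sum_mul]
      rw [Finset.sum_comm]
      refine Finset.sum_congr rfl fun x _ => ?_
      exact Finset.sum_congr rfl fun i _ => Finset.sum_congr rfl fun j _ => by ring
    simp only [star_trivial, h1, h2]
    rw [h3]
    exact Finset.sum_nonneg fun x _ => mul_nonneg (hc x) (mul_self_nonneg _)

lemma psd_det_posDef {m : ℕ} {M : Matrix (Fin m) (Fin m) ℝ} (h : M.PosSemidef)
    (hd : M.det ≠ 0) : M.PosDef := by
  refine posDef_iff_dotProduct_mulVec.mpr ⟨h.1, fun x hx => ?_⟩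
  rcases ((posSemidef_iff_dotProduct_mulVec.mp h).2 x).lt_or_eq with hlt | heq
  · simpa using hlt
  · exfalso
    have h0 : M *ᵥ x = 0 := (h.dotProduct_mulVec_zero_iff x).mp heq.symm
    have hinj : Function.Injective M.mulVec :=
      Matrix.mulVec_injective_iff_isUnit.mpr
        ((Matrix.isUnit_iff_isUnit_det M).mpr (isUnit_iff_ne_zero.mpr hd))
    exact hx (hinj (by simp [h0]))

lemma posDef_trace_pos {m : ℕ} (hm : 0 < m) {M : Matrix (Fin m) (Fin m) ℝ}
    (h : M.PosDef) : 0 < Matrix.trace M := by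
  have : ∀ i, 0 < M i i := by
    intro i
    have := (posDef_iff_dotProduct_mulVec.mp h).2 (x := Pi.single i 1) (by simp [Pi.single_eq_same, Function.ne_iff])
    simpa [dotProduct, Pi.single_apply, Matrix.mulVec] using this
  exact Finset.sum_pos (fun i _ => this i) ⟨⟨0, hm⟩, Finset.mem_univ _⟩

/-- A-efficiency lower bound:
`eff_A(w | w^A) = tr(M⁻¹(w^A))/tr(M⁻¹(w)) ≥ tr(M⁻¹(w)) / max_x a_x(w)`. -/
theorem A_efficiency_lower_bound (m n : ℕ) (hn : 0 < n)
    (f : Fin n → Fin m → ℝ) (hspan : Submodule.span ℝ (Set.range f) = ⊤)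
    (w wA : Fin n → ℝ)
    (hw0 : ∀ x, 0 ≤ w x) (hw1 : ∑ x, w x = 1)
    (hwA0 : ∀ x, 0 ≤ wA x) (hwA1 : ∑ x, wA x = 1)
    (M MA : Matrix (Fin m) (Fin m) ℝ)
    (hM : M = ∑ x, w x • vecMulVec (f x) (f x))
    (hMA : MA = ∑ x, wA x • vecMulVec (f x) (f x))
    (hreg : M.det ≠ 0) (hregA : MA.det ≠ 0)
    (hopt : ∀ w' : Fin n → ℝ, (∀ x, 0 ≤ w' x) → ∑ x, w' x = 1 →
      (∑ x, w' x • vecMulVec (f x) (f x)).det ≠ 0 →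
      (Matrix.trace (∑ x, w' x • vecMulVec (f x) (f x))⁻¹)⁻¹ ≤ (Matrix.trace MA⁻¹)⁻¹) :
    Matrix.trace M⁻¹ / (Finset.univ.sup' ⟨⟨0, hn⟩, Finset.mem_univ _⟩
        (fun x => f x ⬝ᵥ (M⁻¹ * M⁻¹).mulVec (f x))) ≤
      Matrix.trace MA⁻¹ / Matrix.trace M⁻¹ := by
  rcases Nat.eq_zero_or_pos m with hm | hm'
  · subst hm
    have h1 : Matrix.trace M⁻¹ = 0 := by simp [Matrix.trace]
    have h2 : Matrix.trace MA⁻¹ = 0 := by simp [Matrix.trace]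
    rw [h1, h2]
    simp
  -- positive definiteness
  have hMpd : M.PosDef := psd_det_posDef (hM ▸ sum_psd w hw0 f) hreg
  have hMApd : MA.PosDef := psd_det_posDef (hMA ▸ sum_psd wA hwA0 f) hregA
  set S := M⁻¹ with hSdef
  set amax := Finset.univ.sup' ⟨⟨0, hn⟩, Finset.mem_univ _⟩
      (fun x => f x ⬝ᵥ (S * S).mulVec (f x)) with hamaxdef
  have hSpd : S.PosDef := hMpd.inv
  have hT : 0 < Matrix.trace S := posDef_trace_pos hm' hSpd
  have hSsym : Sᵀ = S := by
    rw [← conjTranspose_eq_transpose_of_trivial]; exact hSpd.1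
  -- square root of MA
  have hpsA : MA.PosSemidef := hMApd.posSemidef
  open scoped MatrixOrder in set R := CFC.sqrt MA with hRdef
  have hRps : R.PosSemidef := by open scoped MatrixOrder in exact (CFC.sqrt_nonneg MA).posSemidef
  have hRsym : Rᵀ = R := by
    rw [← conjTranspose_eq_transpose_of_trivial]; exact hRps.1
  have hRR : R * R = MA := by open scoped MatrixOrder in exact CFC.sqrt_mul_sqrt_self MA hpsA.nonneg
  have hdetR : R.det ≠ 0 := fun h0 => hregA (by rw [← hRR, det_mul, h0, zero_mul])
  have hRunit : IsUnit R.det := isUnit_iff_ne_zero.mpr hdetR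
  -- Cauchy–Schwarz
  have key := trace_cs (R * S) R⁻¹
  have e1 : (R * S)ᵀ * R⁻¹ = S := by
    rw [transpose_mul, hSsym, hRsym, Matrix.mul_assoc, Matrix.mul_nonsing_inv R hRunit,
      Matrix.mul_one]
  have e2 : (R * S)ᵀ * (R * S) = S * MA * S := by
    rw [transpose_mul, hSsym, hRsym, ← hRR]
    noncomm_ring
  have e3 : (R⁻¹)ᵀ * R⁻¹ = MA⁻¹ := by
    rw [transpose_nonsing_inv, hRsym, ← Matrix.mul_inv_rev, hRR]
  rw [e1, e2, e3] at key
  -- trace identities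
  have hquad : ∀ (c : Fin n → ℝ),
      Matrix.trace (S * (∑ x, c x • vecMulVec (f x) (f x)) * S)
        = ∑ x, c x * (f x ⬝ᵥ (S * S).mulVec (f x)) := by
    intro c
    have hdist : S * (∑ x, c x • vecMulVec (f x) (f x)) * S
        = ∑ x, c x • (S * vecMulVec (f x) (f x) * S) := by
      rw [Finset.mul_sum, Finset.sum_mul]
      exact Finset.sum_congr rfl fun x _ => by
        rw [Matrix.mul_smul, Matrix.smul_mul]
    rw [hdist, trace_sum]
    refine Finset.sum_congr rfl fun x _ => ?_
    rw [trace_smul, smul_eq_mul]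
    congr 1
    rw [Matrix.mul_assoc, trace_mul_comm, Matrix.mul_assoc, ← trace_vmv]
  have hSMAS : Matrix.trace (S * MA * S) = ∑ x, wA x * (f x ⬝ᵥ (S * S).mulVec (f x)) := by
    rw [hMA]; exact hquad wA
  have hax : ∀ x, f x ⬝ᵥ (S * S).mulVec (f x) ≤ amax :=
    fun x => Finset.le_sup' (fun x => f x ⬝ᵥ (S * S).mulVec (f x)) (Finset.mem_univ x)
  have hbound : ∀ (c : Fin n → ℝ), (∀ x, 0 ≤ c x) → ∑ x, c x = 1 →
      ∑ x, c x * (f x ⬝ᵥ (S * S).mulVec (f x)) ≤ amax := by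
    intro c hc0 hc1
    calc ∑ x, c x * (f x ⬝ᵥ (S * S).mulVec (f x)) ≤ ∑ x, c x * amax :=
          Finset.sum_le_sum fun x _ => mul_le_mul_of_nonneg_left (hax x) (hc0 x)
      _ = amax := by rw [← Finset.sum_mul, hc1, one_mul]
  -- trace S = ∑ w x * a x
  have hTeq : Matrix.trace S = ∑ x, w x * (f x ⬝ᵥ (S * S).mulVec (f x)) := by
    rw [← hquad w, ← hM, Matrix.nonsing_inv_mul M (isUnit_iff_ne_zero.mpr hreg),
      Matrix.one_mul]
  have hamax : Matrix.trace S ≤ amax := hTeq ▸ hbound w hw0 hw1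
  have hamax_pos : 0 < amax := lt_of_lt_of_le hT hamax
  have hTA : 0 < Matrix.trace MA⁻¹ := posDef_trace_pos hm' hMApd.inv
  rw [div_le_div_iff₀ hamax_pos hT]
  calc Matrix.trace S * Matrix.trace S = (Matrix.trace S) ^ 2 := (sq _).symm
    _ ≤ Matrix.trace (S * MA * S) * Matrix.trace MA⁻¹ := key
    _ ≤ amax * Matrix.trace MA⁻¹ :=
        mul_le_mul_of_nonneg_right (hSMAS ▸ hbound wA hwA0 hwA1) hTA.le
    _ = Matrix.trace MA⁻¹ * amax := mul_comm _ _
end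

section
/- Let w be a design with nonsingular M(w), and let u, v with f(u), f(v) linearly independent. Suppose the exchange step α* = [d_v(w) − d_u(w)] / (2[d_u(w)d_v(w) − d_{uv}(w)²]) lies in the open interval (−w_v, w_u). Then det M(w + α*(e_v − e_u)) = det M(w) · (1 + [d_v(w) − d_u(w)]² / (4[d_u(w)d_v(w) − d_{uv}(w)²])). -/
open Matrix

lemma alg_step (du dv duv α : ℝ)
    (hα : α = (dv - du) / (2 * (du * dv - duv ^ 2))) :
    (1 + α * dv) * (1 - α * du) - -(α * duv) * (α * duv) =
      1 + (dv - du) ^ 2 / (4 * (du * dv - duv ^ 2)) := by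
  by_cases hD : du * dv - duv ^ 2 = 0
  · have h0 : α = 0 := by rw [hα, hD]; simp
    rw [h0, hD]
    simp
  · have e : α * (2 * (du * dv - duv ^ 2)) = dv - du := by
      rw [hα, div_mul_cancel₀ _ (mul_ne_zero two_ne_zero hD)]
    rw [← e, show (α * (2 * (du * dv - duv ^ 2))) ^ 2 / (4 * (du * dv - duv ^ 2))
      = α ^ 2 * (du * dv - duv ^ 2) by field_simp; ring]
    linear_combination (-α) * e

/-- Determinant value after the optimal (interior) D-exchange step between two
design points with linearly independent regressors. -/
theorem det_after_optimal_step (m n : ℕ) (f : Fin n → Fin m → ℝ)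
    (w : Fin n → ℝ) (hw0 : ∀ x, 0 ≤ w x) (hw1 : ∑ x, w x = 1)
    (Mfun : (Fin n → ℝ) → Matrix (Fin m) (Fin m) ℝ)
    (hMfun : ∀ w' : Fin n → ℝ, Mfun w' = ∑ x, w' x • vecMulVec (f x) (f x))
    (hreg : (Mfun w).det ≠ 0)
    (u v : Fin n) (hind : LinearIndependent ℝ ![f u, f v])
    (du dv duv : ℝ)
    (hdu : du = f u ⬝ᵥ (Mfun w)⁻¹.mulVec (f u))
    (hdv : dv = f v ⬝ᵥ (Mfun w)⁻¹.mulVec (f v))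
    (hduv : duv = f u ⬝ᵥ (Mfun w)⁻¹.mulVec (f v))
    (αstar : ℝ) (hαstar : αstar = (dv - du) / (2 * (du * dv - duv ^ 2)))
    (hmem : αstar ∈ Set.Ioo (-(w v)) (w u)) :
    (Mfun (w + αstar • (Pi.single v 1 - Pi.single u 1))).det =
      (Mfun w).det * (1 + (dv - du) ^ 2 / (4 * (du * dv - duv ^ 2))) := by
  set M := Mfun w with hM
  -- M is symmetric
  have hsymm : Mᵀ = M := by
    rw [hM, hMfun]
    ext i j
    simp [Matrix.transpose_apply, Matrix.sum_apply, vecMulVec_apply, mul_comm]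
  have hinvsymm : (M⁻¹)ᵀ = M⁻¹ := by
    rw [Matrix.transpose_nonsing_inv, hsymm]
  -- new matrix as rank-two update
  have hnew : Mfun (w + αstar • (Pi.single v 1 - Pi.single u 1)) =
      M + (αstar • vecMulVec (f v) (f v) - αstar • vecMulVec (f u) (f u)) := by
    rw [hMfun, hM, hMfun]
    have h1 : ∀ x : Fin n, ((w + αstar • (Pi.single v 1 - Pi.single u 1) : Fin n → ℝ)) x • vecMulVec (f x) (f x)
        = w x • vecMulVec (f x) (f x)
          + ((Pi.single v (αstar • vecMulVec (f v) (f v)) : Fin n → Matrix (Fin m) (Fin m) ℝ) x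
            - (Pi.single u (αstar • vecMulVec (f u) (f u)) : Fin n → Matrix (Fin m) (Fin m) ℝ) x) := by
      intro x
      have hv : (Pi.single v (αstar • vecMulVec (f v) (f v)) : Fin n → Matrix (Fin m) (Fin m) ℝ) x
          = (αstar * (Pi.single v 1 : Fin n → ℝ) x) • vecMulVec (f x) (f x) := by
        by_cases h : x = v
        · subst h; simp
        · simp [Pi.single_eq_of_ne h, Pi.single_eq_of_ne (fun hh => h hh)]
      have hu : (Pi.single u (αstar • vecMulVec (f u) (f u)) : Fin n → Matrix (Fin m) (Fin m) ℝ) x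
          = (αstar * (Pi.single u 1 : Fin n → ℝ) x) • vecMulVec (f x) (f x) := by
        by_cases h : x = u
        · subst h; simp
        · simp [Pi.single_eq_of_ne h, Pi.single_eq_of_ne (fun hh => h hh)]
      rw [hv, hu]
      simp [Pi.add_apply, Pi.smul_apply, Pi.sub_apply, add_smul, sub_smul,
        smul_smul, mul_sub]
    rw [Finset.sum_congr rfl (fun x _ => h1 x), Finset.sum_add_distrib,
      Finset.sum_sub_distrib, Finset.sum_pi_single', Finset.sum_pi_single']
    simp
  -- rank-two factorization
  set A : Matrix (Fin m) (Fin 2) ℝ :=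
    Matrix.of (fun k j => if j = 0 then αstar * f v k else -(αstar * f u k)) with hA
  set B : Matrix (Fin 2) (Fin m) ℝ := Matrix.of ![f v, f u] with hB
  have hAB : A * B = αstar • vecMulVec (f v) (f v) - αstar • vecMulVec (f u) (f u) := by
    ext k l
    simp [hA, hB, Matrix.mul_apply, Fin.sum_univ_two, vecMulVec_apply]
    ring
  have hMu : IsUnit M.det := isUnit_iff_ne_zero.mpr hreg
  have key : (M + A * B).det = M.det * (1 + B * (M⁻¹ * A)).det := by
    have h2 : M + A * B = M * (1 + M⁻¹ * A * B) := by
      rw [Matrix.mul_add, Matrix.mul_one, ← Matrix.mul_assoc, ← Matrix.mul_assoc,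
        Matrix.mul_nonsing_inv _ hMu, Matrix.one_mul]
    rw [h2, Matrix.det_mul]
    congr 1
    exact Matrix.det_one_add_mul_comm (M⁻¹ * A) B
  -- symmetric cross term
  have hduv' : f v ⬝ᵥ M⁻¹.mulVec (f u) = duv := by
    rw [hduv]
    calc f v ⬝ᵥ M⁻¹.mulVec (f u) = f v ⬝ᵥ (M⁻¹ᵀ.mulVec (f u)) := by rw [hinvsymm]
      _ = f v ⬝ᵥ (M⁻¹.vecMul (f u)) := by rw [Matrix.mulVec_transpose]
      _ = (M⁻¹.vecMul (f u)) ⬝ᵥ f v := dotProduct_comm _ _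
      _ = f u ⬝ᵥ M⁻¹.mulVec (f v) := (Matrix.dotProduct_mulVec _ _ _).symm
  -- compute the 2x2 matrix
  have hMA : M⁻¹ * A = Matrix.of (fun k j =>
      if j = 0 then αstar * M⁻¹.mulVec (f v) k else -(αstar * M⁻¹.mulVec (f u) k)) := by
    ext k j
    fin_cases j <;>
      simp [hA, Matrix.mul_apply, Matrix.mulVec, dotProduct, Finset.mul_sum] <;>
      exact Finset.sum_congr rfl fun l _ => by ring
  have e00 : (B * (M⁻¹ * A)) 0 0 = αstar * dv := by
    rw [hMA, Matrix.mul_apply, hdv, dotProduct, Finset.mul_sum]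
    refine Finset.sum_congr rfl fun k _ => ?_
    simp [hB]
    ring
  have e01 : (B * (M⁻¹ * A)) 0 1 = -(αstar * duv) := by
    rw [hMA, Matrix.mul_apply, ← hduv', dotProduct, Finset.mul_sum,
      ← Finset.sum_neg_distrib]
    refine Finset.sum_congr rfl fun k _ => ?_
    simp [hB]
    ring
  have e10 : (B * (M⁻¹ * A)) 1 0 = αstar * duv := by
    rw [hMA, Matrix.mul_apply, hduv, dotProduct, Finset.mul_sum]
    refine Finset.sum_congr rfl fun k _ => ?_
    simp [hB]
    ring
  have e11 : (B * (M⁻¹ * A)) 1 1 = -(αstar * du) := by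
    rw [hMA, Matrix.mul_apply, hdu, dotProduct, Finset.mul_sum,
      ← Finset.sum_neg_distrib]
    refine Finset.sum_congr rfl fun k _ => ?_
    simp [hB]
    ring
  have hC : (1 + B * (M⁻¹ * A)) =
      !![1 + αstar * dv, -(αstar * duv); αstar * duv, 1 - αstar * du] := by
    ext i j
    fin_cases i <;> fin_cases j
    · simp [Matrix.add_apply, Matrix.one_apply, e00]
    · simp [Matrix.add_apply, Matrix.one_apply, e01]
    · simp [Matrix.add_apply, Matrix.one_apply, e10]
    · simp [Matrix.add_apply, Matrix.one_apply, e11]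
      ring
  rw [hnew, ← hAB, key, hC, Matrix.det_fin_two_of, alg_step du dv duv αstar hαstar]
end

section
/- The function M ↦ −tr(M⁻¹) is strictly concave on the set of m×m symmetric positive definite matrices when m ≥ 1; in particular, for distinct positive definite M₁ ≠ M₂ and λ ∈ (0,1), −tr((λM₁ + (1−λ)M₂)⁻¹) > −λ·tr(M₁⁻¹) − (1−λ)·tr(M₂⁻¹). -/
open Matrix

section Aux

variable {m : ℕ}

/-- trace of `Yᵀ * A * Y` as a sum of quadratic forms over the columns of `Y`. -/
lemma trace_transpose_mul_mul (A Y : Matrix (Fin m) (Fin m) ℝ) :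
    Matrix.trace (Yᵀ * A * Y) = ∑ j, (fun i => Y i j) ⬝ᵥ A *ᵥ (fun i => Y i j) := by
  simp only [Matrix.trace, Matrix.diag, Matrix.mul_apply, Matrix.transpose_apply,
    dotProduct, Matrix.mulVec, Finset.sum_mul, Finset.mul_sum]
  refine Finset.sum_congr rfl fun j _ => ?_
  rw [Finset.sum_comm]
  refine Finset.sum_congr rfl fun i _ => Finset.sum_congr rfl fun k _ => by ring

lemma trace_pos_of_ne_zero {A Y : Matrix (Fin m) (Fin m) ℝ} (hA : A.PosDef)
    (hY : Y ≠ 0) : 0 < Matrix.trace (Yᵀ * A * Y) := by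
  rw [trace_transpose_mul_mul]
  have hcol : ∃ j, (fun i => Y i j) ≠ 0 := by
    by_contra h
    push_neg at h
    apply hY
    ext i j
    exact congrFun (h j) i
  obtain ⟨j, hj⟩ := hcol
  refine Finset.sum_pos' (fun k _ => ?_) ⟨j, Finset.mem_univ j, ?_⟩
  · have := hA.posSemidef.dotProduct_mulVec_nonneg (fun i => Y i k)
    simpa using this
  · have := hA.dotProduct_mulVec_pos hj
    simpa using this

/-- Key strict inequality: for `A` positive definite and symmetric `X ≠ A⁻¹`,
`-tr A⁻¹ < tr (X A X) - 2 tr X` (completing the square). -/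
lemma key_ineq {A X : Matrix (Fin m) (Fin m) ℝ} (hA : A.PosDef) (hX : Xᵀ = X)
    (hXA : X ≠ A⁻¹) :
    -Matrix.trace A⁻¹ < Matrix.trace (X * A * X) - 2 * Matrix.trace X := by
  set Y := X - A⁻¹ with hYdef
  have hAinv : A⁻¹ᵀ = A⁻¹ := by
    rw [← Matrix.conjTranspose_eq_transpose_of_trivial]
    exact hA.inv.isHermitian
  have hYt : Yᵀ = Y := by rw [hYdef, Matrix.transpose_sub, hX, hAinv]
  have hY0 : Y ≠ 0 := sub_ne_zero.mpr hXA
  have hdet : IsUnit A.det := isUnit_iff_isUnit_det A |>.mp hA.isUnit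
  have h1 : A * A⁻¹ = 1 := Matrix.mul_nonsing_inv A hdet
  have h2 : A⁻¹ * A = 1 := Matrix.nonsing_inv_mul A hdet
  have hpos : 0 < Matrix.trace (Yᵀ * A * Y) := trace_pos_of_ne_zero hA hY0
  rw [hYt] at hpos
  have hexp : Y * A * Y = X * A * X - X * (A * A⁻¹) - A⁻¹ * A * X + A⁻¹ * A * A⁻¹ := by
    rw [hYdef]; noncomm_ring
  rw [hexp, h1, h2, mul_one, one_mul, one_mul] at hpos
  have : Matrix.trace (X * A * X - X - X + A⁻¹) =
      Matrix.trace (X * A * X) - 2 * Matrix.trace X + Matrix.trace A⁻¹ := by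
    simp [Matrix.trace_add, Matrix.trace_sub]; ring
  rw [this] at hpos
  linarith

lemma key_ineq_le {A X : Matrix (Fin m) (Fin m) ℝ} (hA : A.PosDef) (hX : Xᵀ = X) :
    -Matrix.trace A⁻¹ ≤ Matrix.trace (X * A * X) - 2 * Matrix.trace X := by
  rcases eq_or_ne X A⁻¹ with rfl | h
  · have hdet : IsUnit A.det := isUnit_iff_isUnit_det A |>.mp hA.isUnit
    rw [Matrix.nonsing_inv_mul A hdet, one_mul]
    linarith
  · exact (key_ineq hA hX h).le

lemma smul_posDef {A : Matrix (Fin m) (Fin m) ℝ} (hA : A.PosDef) {c : ℝ}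
    (hc : 0 < c) : (c • A).PosDef := by
  constructor
  · rw [Matrix.IsHermitian, Matrix.conjTranspose_smul, star_trivial,
      hA.isHermitian.eq]
  · intro x hx
    have := hA.2 hx
    simpa [Finsupp.mul_sum, mul_assoc, mul_left_comm] using smul_pos hc this

end Aux

/-- Strict concavity of `M ↦ −tr(M⁻¹)` on symmetric positive definite matrices
(for `m ≥ 1`). -/
theorem neg_trace_inv_strictConcave (m : ℕ) (hm : 1 ≤ m)
    (M₁ M₂ : Matrix (Fin m) (Fin m) ℝ) (h₁ : M₁.PosDef) (h₂ : M₂.PosDef)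
    (hne : M₁ ≠ M₂) (lam : ℝ) (hlam : lam ∈ Set.Ioo (0 : ℝ) 1) :
    -(lam * Matrix.trace M₁⁻¹) - (1 - lam) * Matrix.trace M₂⁻¹ <
      -Matrix.trace (lam • M₁ + (1 - lam) • M₂)⁻¹ := by
  obtain ⟨hl0, hl1⟩ := hlam
  have hl1' : 0 < 1 - lam := by linarith
  set M := lam • M₁ + (1 - lam) • M₂ with hMdef
  have hM : M.PosDef := (smul_posDef h₁ hl0).add (smul_posDef h₂ hl1')
  set X := M⁻¹ with hXdef
  have hXt : Xᵀ = X := by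
    rw [hXdef, ← Matrix.conjTranspose_eq_transpose_of_trivial]
    exact hM.inv.isHermitian
  have hdet : IsUnit M.det := isUnit_iff_isUnit_det M |>.mp hM.isUnit
  have hXMX : Matrix.trace (X * M * X) - 2 * Matrix.trace X = -Matrix.trace M⁻¹ := by
    rw [hXdef, Matrix.nonsing_inv_mul M hdet, one_mul]
    ring
  have hlin : Matrix.trace (X * M * X) =
      lam * Matrix.trace (X * M₁ * X) + (1 - lam) * Matrix.trace (X * M₂ * X) := by
    rw [hMdef]
    simp [Matrix.mul_add, Matrix.add_mul, Matrix.mul_smul, Matrix.smul_mul,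
      Matrix.trace_add, Matrix.trace_smul, smul_eq_mul]
  have hnotboth : X ≠ M₁⁻¹ ∨ X ≠ M₂⁻¹ := by
    by_contra h
    push_neg at h
    exact hne (Matrix.inv_inj (h.1 ▸ h.2.symm ▸ rfl : M₁⁻¹ = M₂⁻¹)
      (isUnit_iff_isUnit_det M₁ |>.mp h₁.isUnit))
  have le₁ := key_ineq_le h₁ hXt
  have le₂ := key_ineq_le h₂ hXt
  rcases hnotboth with h | h
  · have lt₁ := key_ineq h₁ hXt h
    have := mul_lt_mul_of_pos_left lt₁ hl0
    have := mul_le_mul_of_nonneg_left le₂ hl1'.le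
    nlinarith [hXMX, hlin]
  · have lt₂ := key_ineq h₂ hXt h
    have := mul_lt_mul_of_pos_left lt₂ hl1'
    have := mul_le_mul_of_nonneg_left le₁ hl0.le
    nlinarith [hXMX, hlin]
end

section
/- Let M be symmetric positive definite, f_u, f_v ∈ R^m, and α ∈ (−w_v, w_u) be such that M_α := M + α·f_v f_v' − α·f_u f_u' is positive definite. Then tr(M_α⁻¹) = tr(M⁻¹) − (αA + α²B)/(1 + αC − α²D), where, with V = M⁻¹, d_u = f_u'Vf_u, d_v = f_v'Vf_v, d_uv = f_u'Vf_v, a_u = f_u'V²f_u, a_v = f_v'V²f_v, a_uv = f_u'V²f_v, A = a_v − a_u, B = 2·d_uv·a_uv − d_u·a_v − d_v·a_u, C = d_v − d_u, D = d_u·d_v − d_uv². -/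
open Matrix

section Helpers

variable {n : Type*} [Fintype n]

private lemma hmulvv (A : Matrix n n ℝ) (u v : n → ℝ) :
    A * vecMulVec u v = vecMulVec (A *ᵥ u) v := by
  ext i j
  simp only [vecMulVec_apply, mul_apply, mulVec, dotProduct, Finset.sum_mul]
  exact Finset.sum_congr rfl fun k _ => by ring

private lemma hvvmul (A : Matrix n n ℝ) (u v : n → ℝ) :
    vecMulVec u v * A = vecMulVec u (Aᵀ *ᵥ v) := by
  ext i j
  simp only [vecMulVec_apply, mul_apply, mulVec, dotProduct, Finset.mul_sum, transpose_apply]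
  exact Finset.sum_congr rfl fun k _ => by ring

private lemma hvvvv (u v w x : n → ℝ) :
    vecMulVec u v * vecMulVec w x = (v ⬝ᵥ w) • vecMulVec u x := by
  ext i j
  simp only [vecMulVec_apply, mul_apply, Matrix.smul_apply, smul_eq_mul, dotProduct, Finset.sum_mul]
  exact Finset.sum_congr rfl fun k _ => by ring

private lemma htrvv (u v : n → ℝ) : Matrix.trace (vecMulVec u v) = u ⬝ᵥ v := by
  simp [Matrix.trace, vecMulVec_apply, dotProduct, diag]

private lemma hvvmulvec (u v w : n → ℝ) : vecMulVec u v *ᵥ w = (v ⬝ᵥ w) • u := by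
  funext i
  simp only [vecMulVec_apply, mulVec, dotProduct, Pi.smul_apply, smul_eq_mul, Finset.sum_mul]
  exact Finset.sum_congr rfl fun k _ => by ring

end Helpers

/-- Exact trace-of-inverse formula under the rank-two symmetric update
`M_α = M + α f_v f_v' − α f_u f_u'` (Woodbury identity). -/
theorem trace_inv_rank_two_update (m : ℕ) (M : Matrix (Fin m) (Fin m) ℝ)
    (hM : M.PosDef) (fu fv : Fin m → ℝ) (wu wv α : ℝ)
    (hα : α ∈ Set.Ioo (-wv) wu)
    (Mα : Matrix (Fin m) (Fin m) ℝ)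
    (hMα : Mα = M + α • vecMulVec fv fv - α • vecMulVec fu fu)
    (hMαpd : Mα.PosDef)
    (V : Matrix (Fin m) (Fin m) ℝ) (hV : V = M⁻¹)
    (du dv duv au av auv A B C D : ℝ)
    (hdu : du = fu ⬝ᵥ V.mulVec fu) (hdv : dv = fv ⬝ᵥ V.mulVec fv)
    (hduv : duv = fu ⬝ᵥ V.mulVec fv)
    (hau : au = fu ⬝ᵥ (V * V).mulVec fu) (hav : av = fv ⬝ᵥ (V * V).mulVec fv)
    (hauv : auv = fu ⬝ᵥ (V * V).mulVec fv)
    (hA : A = av - au) (hB : B = 2 * duv * auv - du * av - dv * au)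
    (hC : C = dv - du) (hD : D = du * dv - duv ^ 2) :
    Matrix.trace Mα⁻¹ =
      Matrix.trace M⁻¹ - (α * A + α ^ 2 * B) / (1 + α * C - α ^ 2 * D) := by
  subst hA hB hC hD
  -- basic facts about V
  have hMs : Mᵀ = M := hM.isHermitian.eq
  have hVs : Vᵀ = V := by rw [hV, transpose_nonsing_inv, hMs]
  have hMV : M * V = 1 := by
    rw [hV]; exact mul_nonsing_inv _ (isUnit_iff_isUnit_det M |>.mp hM.isUnit)
  set g : Fin m → ℝ := V *ᵥ fu with hg
  set h : Fin m → ℝ := V *ᵥ fv with hh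
  have hMg : M *ᵥ g = fu := by rw [hg, mulVec_mulVec, hMV, one_mulVec]
  have hMh : M *ᵥ h = fv := by rw [hh, mulVec_mulVec, hMV, one_mulVec]
  have hvmV : ∀ x : Fin m → ℝ, x ᵥ* V = V *ᵥ x := by
    intro x; rw [← hVs, mulVec_transpose, hVs]
  -- dot product facts
  have dug : fu ⬝ᵥ g = du := hdu.symm
  have dvh : fv ⬝ᵥ h = dv := hdv.symm
  have duh : fu ⬝ᵥ h = duv := hduv.symm
  have dvg : fv ⬝ᵥ g = duv := by
    rw [hg, dotProduct_mulVec, hvmV, ← hh, dotProduct_comm, duh]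
  have hsym2 : ∀ a b : Fin m → ℝ,
      a ⬝ᵥ (V *ᵥ (V *ᵥ b)) = (V *ᵥ a) ⬝ᵥ (V *ᵥ b) := fun a b => by
    rw [dotProduct_mulVec a V (V *ᵥ b), hvmV]
  have dgg : g ⬝ᵥ g = au := by
    rw [hau, ← mulVec_mulVec]; exact (hsym2 fu fu).symm
  have dhh : h ⬝ᵥ h = av := by
    rw [hav, ← mulVec_mulVec]; exact (hsym2 fv fv).symm
  have dgh : g ⬝ᵥ h = auv := by
    rw [hauv, ← mulVec_mulVec]; exact (hsym2 fu fv).symm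
  have dhg : h ⬝ᵥ g = auv := by rw [dotProduct_comm, dgh]
  have dgu : g ⬝ᵥ fu = du := by rw [dotProduct_comm, dug]
  have dgv : g ⬝ᵥ fv = duv := by rw [dotProduct_comm, dvg]
  have dhu : h ⬝ᵥ fu = duv := by rw [dotProduct_comm, duh]
  have dhv : h ⬝ᵥ fv = dv := by rw [dotProduct_comm, dvh]
  -- the denominator is nonzero
  have hden : 1 + α * (dv - du) - α ^ 2 * (du * dv - duv ^ 2) ≠ 0 := by
    intro h0
    set w : Fin m → ℝ := (1 + α * dv) • g - (α * duv) • h with hwdef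
    have hw : Mα *ᵥ w =
        (1 + α * (dv - du) - α ^ 2 * (du * dv - duv ^ 2)) • fu := by
      rw [hMα, hwdef]
      simp only [add_mulVec, sub_mulVec, smul_mulVec, mulVec_sub, mulVec_smul,
        hvvmulvec, hMg, hMh, dotProduct_sub, dotProduct_smul, dvg, dvh, dug, duh,
        smul_eq_mul, smul_smul]
      module
    rw [h0, zero_smul] at hw
    have hw0 : w = 0 := by
      have hinj := mulVec_injective_iff_isUnit.mpr hMαpd.isUnit
      exact hinj (by simpa using hw)
    have hMw : (1 + α * dv) • fu - (α * duv) • fv = 0 := by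
      have h1 : M *ᵥ w = 0 := by rw [hw0, mulVec_zero]
      rw [hwdef, mulVec_sub, mulVec_smul, mulVec_smul, hMg, hMh] at h1
      exact h1
    have hduv0 : duv = 0 := by
      have h2 := congrArg (fun x => x ⬝ᵥ h) hMw
      simp only [sub_dotProduct, smul_dotProduct, duh, dvh, smul_eq_mul,
        zero_dotProduct] at h2
      linear_combination h2
    rw [hduv0] at h0
    have hsplit : (1 + α * dv) * (1 - α * du) = 0 := by linear_combination h0
    rcases mul_eq_zero.mp hsplit with hc | hc
    · -- 1 + α dv = 0
      have hfv : fv ≠ 0 := by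
        intro hz
        have hdv0 : dv = 0 := by rw [hdv, hz]; simp
        rw [hdv0] at hc; norm_num at hc
      have hhne : h ≠ 0 := fun hz => hfv (by rw [← hMh, hz, mulVec_zero])
      have hpos : 0 < h ⬝ᵥ (Mα *ᵥ h) := by simpa using hMαpd.dotProduct_mulVec_pos hhne
      have hval : h ⬝ᵥ (Mα *ᵥ h) = dv + α * dv * dv - α * duv * duv := by
        rw [hMα]
        simp only [add_mulVec, sub_mulVec, smul_mulVec, hvvmulvec, hMh,
          dotProduct_add, dotProduct_sub, dotProduct_smul, dvh, duh, dhv, dhu,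
          smul_eq_mul]
        ring
      rw [hval] at hpos
      have : dv + α * dv * dv - α * duv * duv = 0 := by
        linear_combination dv * hc - α * duv * hduv0
      linarith
    · -- 1 - α du = 0
      have hfu : fu ≠ 0 := by
        intro hz
        have hdu0 : du = 0 := by rw [hdu, hz]; simp
        rw [hdu0] at hc; norm_num at hc
      have hgne : g ≠ 0 := fun hz => hfu (by rw [← hMg, hz, mulVec_zero])
      have hpos : 0 < g ⬝ᵥ (Mα *ᵥ g) := by simpa using hMαpd.dotProduct_mulVec_pos hgne
      have hval : g ⬝ᵥ (Mα *ᵥ g) = du + α * duv * duv - α * du * du := by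
        rw [hMα]
        simp only [add_mulVec, sub_mulVec, smul_mulVec, hvvmulvec, hMg,
          dotProduct_add, dotProduct_sub, dotProduct_smul, dvg, dug, dgv, dgu,
          smul_eq_mul]
        ring
      rw [hval] at hpos
      have : du + α * duv * duv - α * du * du = 0 := by
        linear_combination du * hc + α * duv * hduv0
      linarith
  -- candidate (scaled) inverse
  set den : ℝ := 1 + α * (dv - du) - α ^ 2 * (du * dv - duv ^ 2) with hdend
  set P : Matrix (Fin m) (Fin m) ℝ :=
    den • V + (-(α * (1 - α * du))) • vecMulVec h h + (α * (1 + α * dv)) • vecMulVec g g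
      + (-(α ^ 2 * duv)) • vecMulVec g h + (-(α ^ 2 * duv)) • vecMulVec h g with hP
  have hFV : vecMulVec fv fv * V = vecMulVec fv h := by rw [hvvmul, hVs]
  have hGV : vecMulVec fu fu * V = vecMulVec fu g := by rw [hvvmul, hVs]
  have hMh' : ∀ c : Fin m → ℝ, M * vecMulVec h c = vecMulVec fv c := fun c => by
    rw [hmulvv, hMh]
  have hMg' : ∀ c : Fin m → ℝ, M * vecMulVec g c = vecMulVec fu c := fun c => by
    rw [hmulvv, hMg]
  have key : Mα * P = den • 1 := by
    rw [hMα, hP]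
    simp only [Matrix.add_mul, Matrix.sub_mul, Matrix.mul_add, Matrix.smul_mul,
      Matrix.mul_smul, hMh', hMg', hvvvv, hMV, hFV, hGV,
      dvh, dvg, dug, duh, smul_smul]
    module
  have hMαinv : Mα⁻¹ = den⁻¹ • P := by
    apply inv_eq_right_inv
    rw [Matrix.mul_smul, key, smul_smul, inv_mul_cancel₀ hden, one_smul]
  rw [hMαinv, hP]
  simp only [trace_smul, trace_add, htrvv, dhh, dgg, dgh, dhg, smul_eq_mul, ← hV]
  field_simp
  ring
end
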